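/- arXiv:2504.07985 — 3 statements merged into one kernel-verified Lean document; each statement's English description precedes it below -/
import Mathlib

section
/- For n ≥ 2, the polynomial p_n(x) = x^n − x^{n−1} − ⋯ − x − 1 has exactly one real root in the interval (1, 2), and p_n(2) = 1 while p_n(1) = 1 − n < 0. -/
/-- p_n(x) = x^n − ∑_{k=0}^{n−1} x^k over ℝ. -/
noncomputable def p (n : ℕ) (x : ℝ) : ℝ := x ^ n - ∑ k ∈ Finset.range n, x ^ k

lemma key (n : ℕ) (x : ℝ) : (x - 1) * p n x = x ^ (n + 1) - 2 * x ^ n + 1 := by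
  unfold p
  linear_combination -geom_sum_mul x n

lemma p_cont (n : ℕ) : Continuous (p n) := by
  unfold p
  fun_prop

lemma deriv_root (n : ℕ) (hn : 2 ≤ n) {c : ℝ} (hc : 0 < c)
    (h : ((n + 1 : ℕ) : ℝ) * c ^ n - 2 * ((n : ℝ) * c ^ (n - 1)) = 0) :
    ((n : ℝ) + 1) * c = 2 * n := by
  have hpow : c ^ n = c ^ (n - 1) * c := by
    rw [← pow_succ]; congr 1; omega
  have hcp : (0 : ℝ) < c ^ (n - 1) := pow_pos hc _
  push_cast at h
  rw [hpow] at h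
  have h2 : c ^ (n - 1) * (((n : ℝ) + 1) * c - 2 * n) = 0 := by ring_nf; ring_nf at h; linarith
  have := mul_eq_zero.mp h2
  rcases this with h3 | h3
  · exact absurd h3 (ne_of_gt hcp)
  · linarith

lemma no_two_roots (n : ℕ) (hn : 2 ≤ n) {x y : ℝ} (h1x : 1 < x) (hxy : x < y) (hy2 : y < 2)
    (hpx : p n x = 0) (hpy : p n y = 0) : False := by
  set f : ℝ → ℝ := fun t => t ^ (n + 1) - 2 * t ^ n + 1 with hf
  set f' : ℝ → ℝ := fun t => ((n + 1 : ℕ) : ℝ) * t ^ n - 2 * ((n : ℝ) * t ^ (n - 1)) with hf'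
  have hderiv : ∀ t : ℝ, HasDerivAt f (f' t) t := by
    intro t
    have h1 : HasDerivAt (fun s : ℝ => s ^ (n + 1)) (((n + 1 : ℕ) : ℝ) * t ^ n) t := by
      simpa using hasDerivAt_pow (n + 1) t
    have h2 : HasDerivAt (fun s : ℝ => 2 * s ^ n) (2 * ((n : ℝ) * t ^ (n - 1))) t :=
      (hasDerivAt_pow n t).const_mul 2
    simpa [hf, hf'] using (h1.sub h2).add_const 1
  have hcont : Continuous f := by fun_prop
  have hq1 : f 1 = 0 := by simp [hf]; ring
  have hqx : f x = 0 := by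
    have := key n x
    rw [hpx, mul_zero] at this
    simp [hf, ← this]
  have hqy : f y = 0 := by
    have := key n y
    rw [hpy, mul_zero] at this
    simp [hf, ← this]
  obtain ⟨c1, hc1, hc1'⟩ := exists_hasDerivAt_eq_zero h1x hcont.continuousOn
    (by rw [hq1, hqx]) (fun t _ => hderiv t)
  obtain ⟨c2, hc2, hc2'⟩ := exists_hasDerivAt_eq_zero hxy hcont.continuousOn
    (by rw [hqx, hqy]) (fun t _ => hderiv t)
  have e1 : ((n : ℝ) + 1) * c1 = 2 * n := deriv_root n hn (by linarith [hc1.1]) hc1'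
  have e2 : ((n : ℝ) + 1) * c2 = 2 * n := deriv_root n hn (by linarith [hc2.1, hc1.1]) hc2'
  have hn1 : (0 : ℝ) < (n : ℝ) + 1 := by positivity
  nlinarith [hc1.2, hc2.1]

theorem stmt_3 (n : ℕ) (hn : 2 ≤ n) :
    (∃! x : ℝ, x ∈ Set.Ioo (1 : ℝ) 2 ∧ p n x = 0) ∧
    p n 2 = 1 ∧ p n 1 = 1 - n ∧ p n 1 < 0 := by
  have hp1 : p n 1 = 1 - n := by
    simp [p]
  have hp2 : p n 2 = 1 := by
    have := key n 2
    have h1 : (2:ℝ) - 1 = 1 := by norm_num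
    rw [h1, one_mul] at this
    rw [this]; ring
  have hn' : (2 : ℝ) ≤ (n : ℝ) := by exact_mod_cast hn
  have hp1neg : p n 1 < 0 := by rw [hp1]; linarith
  refine ⟨?_, hp2, hp1, hp1neg⟩
  have hsub : Set.Ioo (p n 1) (p n 2) ⊆ p n '' Set.Ioo 1 2 :=
    intermediate_value_Ioo (by norm_num) (p_cont n).continuousOn
  have h0 : (0 : ℝ) ∈ Set.Ioo (p n 1) (p n 2) := by
    exact ⟨hp1neg, by rw [hp2]; norm_num⟩
  obtain ⟨x, hx, hpx⟩ := hsub h0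
  refine ⟨x, ⟨hx, hpx⟩, ?_⟩
  rintro y ⟨hy, hpy⟩
  rcases lt_trichotomy y x with h | h | h
  · exact absurd (no_two_roots n hn hy.1 h hx.2 hpy hpx) not_false
  · exact h
  · exact absurd (no_two_roots n hn hx.1 h hy.2 hpx hpy) not_false
end

section
/- As n → ∞, the unique root r_n of p_n in (1,2) converges to 2. Concretely, for 1 < x < 2, p_n(x) = (x^{n+1} − 2x^n + 1)/(x − 1), and for any fixed x ∈ (1,2), p_n(x) < 0 for all sufficiently large n; hence r_n → 2. -/
lemma p_formula (x : ℝ) (hx : x ≠ 1) (n : ℕ) :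
    p n x = (x ^ (n + 1) - 2 * x ^ n + 1) / (x - 1) := by
  have hx1 : x - 1 ≠ 0 := sub_ne_zero.mpr hx
  rw [p, geom_sum_eq hx]
  field_simp
  ring

theorem stmt_7 (r : ℕ → ℝ)
    (hr : ∀ n, 2 ≤ n → r n ∈ Set.Ioo (1 : ℝ) 2 ∧ p n (r n) = 0) :
    (∀ x : ℝ, 1 < x → x < 2 → ∀ n, 2 ≤ n →
        p n x = (x ^ (n + 1) - 2 * x ^ n + 1) / (x - 1)) ∧
    (∀ x : ℝ, 1 < x → x < 2 → ∀ᶠ n in Filter.atTop, p n x < 0) ∧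
    Filter.Tendsto r Filter.atTop (nhds 2) := by
  refine ⟨fun x hx1 hx2 n _ => p_formula x (ne_of_gt hx1) n, ?_, ?_⟩
  · intro x hx1 hx2
    have hpow : Filter.Tendsto (fun n : ℕ => x ^ n) Filter.atTop Filter.atTop :=
      tendsto_pow_atTop_atTop_of_one_lt hx1
    have h2x : (0:ℝ) < 2 - x := by linarith
    have hmul : Filter.Tendsto (fun n : ℕ => x ^ n * (2 - x)) Filter.atTop Filter.atTop :=
      hpow.atTop_mul_const h2x
    filter_upwards [hmul.eventually_gt_atTop 1] with n hn
    rw [p_formula x (ne_of_gt hx1) n]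
    apply div_neg_of_neg_of_pos
    · have : x ^ (n+1) = x ^ n * x := pow_succ x n
      nlinarith
    · linarith
  · have key : ∀ n : ℕ, 2 ≤ n → 2 - 1 / (n:ℝ) ≤ r n ∧ r n ≤ 2 := by
      intro n hn
      obtain ⟨⟨h1, h2⟩, hp⟩ := hr n hn
      set x := r n with hxdef
      have hx1 : x ≠ 1 := ne_of_gt h1
      -- x^n = sum ≥ n
      have hsum : x ^ n = ∑ k ∈ Finset.range n, x ^ k := by
        have := hp
        rw [p] at this
        linarith
      have hpown : (n:ℝ) ≤ x ^ n := by
        rw [hsum]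
        calc (n:ℝ) = ∑ _k ∈ Finset.range n, (1:ℝ) := by simp
        _ ≤ ∑ k ∈ Finset.range n, x ^ k :=
          Finset.sum_le_sum fun k _ => one_le_pow₀ (le_of_lt h1)
      -- x^n (2 - x) = 1
      have hnum : x ^ n * (2 - x) = 1 := by
        rw [p_formula x hx1 n] at hp
        have hx0 : x - 1 ≠ 0 := sub_ne_zero.mpr hx1
        have := (div_eq_zero_iff.mp hp).resolve_right hx0
        have hxs : x ^ (n+1) = x ^ n * x := pow_succ x n
        nlinarith
      have hnpos : (0:ℝ) < n := by positivity
      have h2x : (0:ℝ) < 2 - x := by linarith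
      constructor
      · have h1n : 2 - x ≤ 1 / (n:ℝ) := by
          rw [le_div_iff₀ hnpos]; nlinarith
        linarith
      · linarith
    have hlo : Filter.Tendsto (fun n : ℕ => 2 - 1 / (n:ℝ)) Filter.atTop (nhds 2) := by
      have := (tendsto_const_nhds (x := (2:ℝ)) (f := Filter.atTop (α := ℕ))).sub
        tendsto_one_div_atTop_nhds_zero_nat
      simpa using this
    refine tendsto_of_tendsto_of_tendsto_of_le_of_le' hlo tendsto_const_nhds ?_ ?_
    · filter_upwards [Filter.eventually_atTop.mpr ⟨2, fun n hn => hn⟩] with n hn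
      exact (key n hn).1
    · filter_upwards [Filter.eventually_atTop.mpr ⟨2, fun n hn => hn⟩] with n hn
      exact (key n hn).2
end

section
/- If λ ∈ ℂ is a root of p_n(x) = x^n − ∑_{k=0}^{n−1} x^k with |λ| = 1, then from λ^{n}(λ−2) = −1 (valid since (λ−1)p_n(λ) = λ^{n+1} − 2λ^n + 1 and λ ≠ 1) it follows that |λ − 2| = 1, hence λ = 1, a contradiction; therefore p_n has no roots on the unit circle. -/
/-! Multiplying the root equation by `λ - 1` gives `λ ^ n * (λ - 2) = -1`. On the unit circle this
forces `‖λ - 2‖ = 1`, so `λ` lies at distance 1 from both `0` and `2`; by strict convexity of `ℂ`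
it is their midpoint `1`, which is not a root once `n ≠ 1`. -/

theorem pow_mul_sub_two_eq_neg_one_of_pow_eq_geom_sum {R : Type*} [CommRing R] {x : R} {n : ℕ}
    (h : x ^ n = ∑ k ∈ Finset.range n, x ^ k) : x ^ n * (x - 2) = -1 := by
  have hgeom := mul_geom_sum x n
  rw [← h] at hgeom
  linear_combination hgeom

theorem Complex.eq_one_of_norm_eq_one_of_norm_sub_two_eq_one {z : ℂ} (h₁ : ‖z‖ = 1)
    (h₂ : ‖z - 2‖ = 1) : z = 1 := by
  have hmid : z = midpoint ℝ (0 : ℂ) 2 :=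
    eq_midpoint_of_dist_eq_half (by norm_num [dist_eq_norm, h₁]) (by norm_num [dist_eq_norm, h₂])
  rw [hmid, midpoint_eq_smul_add]
  norm_num

theorem one_pow_sub_geom_sum_ne_zero {n : ℕ} (hn : n ≠ 1) :
    (1 : ℂ) ^ n - ∑ k ∈ Finset.range n, (1 : ℂ) ^ k ≠ 0 := by
  simp only [one_pow, Finset.sum_const, Finset.card_range, nsmul_eq_mul, mul_one, sub_ne_zero]
  exact_mod_cast (Ne.symm hn)

theorem stmt_16 (n : ℕ) (hn : 2 ≤ n) (lam : ℂ)
    (hroot : lam ^ n - ∑ k ∈ Finset.range n, lam ^ k = 0) :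
    ‖lam‖ ≠ 1 := by
  intro hnorm
  have key : lam ^ n * (lam - 2) = -1 :=
    pow_mul_sub_two_eq_neg_one_of_pow_eq_geom_sum (sub_eq_zero.mp hroot)
  have hnorm₂ : ‖lam - 2‖ = 1 := by
    simpa [hnorm] using congrArg (‖·‖) key
  obtain rfl := Complex.eq_one_of_norm_eq_one_of_norm_sub_two_eq_one hnorm hnorm₂
  exact one_pow_sub_geom_sum_ne_zero (by omega) hroot
end
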